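/- arXiv:1906.11693 — 6 statements merged into one kernel-verified Lean document; each statement's English description precedes it below -/
import Mathlib

section
/- For every fractional order α ∈ (0,1), every tolerance ε > 0, every cut-off time Δt with 0 < Δt < T, there exist a positive integer N_q, positive quadrature nodes θ^1, …, θ^{N_q} and positive weights ϖ^1, …, ϖ^{N_q} such that |ω_{1−α}(t) − Σ_{ℓ=1}^{N_q} ϖ^ℓ e^{−θ^ℓ t}| ≤ ε for all t ∈ [Δt, T]. -/
open Real

/-- `ω_μ(s) := s^{μ−1}/Γ(μ)`. -/
noncomputable def omega (μ s : ℝ) : ℝ := s ^ (μ - 1) / Real.Gamma μ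

/-
By the Gamma integral, `Γ(α) Γ(1-α) ω_{1-α}(s) = ∫₀^∞ θ^{α-1} e^{-sθ} dθ`. Cutting the integral at
`θ = b ≥ 1` costs at most `e^{-Δt b}/Δt` uniformly in `s ≥ Δt`, because `θ^{α-1} ≤ 1` there. On
`[0, b]`, integrating `θ^{α-1}` exactly over `N` equal cells and freezing `e^{-sθ}` at the right
endpoints costs at most `s (b/N) b^α/α`, because `θ ↦ e^{-sθ}` is `s`-Lipschitz on `[0, ∞)`. The
resulting weights `∫_cell θ^{α-1}` are positive, and taking `b`, then `N`, large makes both errors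
small.
-/

open MeasureTheory Set Filter Topology
open scoped NNReal

lemma abs_exp_neg_sub_exp_neg_le {u v : ℝ} (hu : 0 ≤ u) (hv : 0 ≤ v) :
    |exp (-u) - exp (-v)| ≤ |u - v| := by
  wlog huv : u ≤ v generalizing u v
  · rw [abs_sub_comm, abs_sub_comm u]; exact this hv hu (le_of_not_ge huv)
  have hexp : exp (-u) - exp (-v) = exp (-u) * (1 - exp (-(v - u))) := by
    rw [mul_sub, mul_one, ← exp_add]; ring_nf
  have h1 : 0 ≤ 1 - exp (-(v - u)) := sub_nonneg.2 (exp_le_one_iff.2 (by linarith))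
  have h2 : 1 - exp (-(v - u)) ≤ v - u := by linarith [add_one_le_exp (-(v - u))]
  rw [hexp, abs_of_nonneg (mul_nonneg (exp_pos _).le h1), abs_of_nonpos (by linarith)]
  calc _ ≤ 1 * (v - u) := mul_le_mul (exp_le_one_iff.2 (by linarith)) h2 h1 zero_le_one
    _ = -(u - v) := by ring

lemma lipschitzOnWith_exp_neg_mul {s : ℝ} (hs : 0 ≤ s) :
    LipschitzOnWith s.toNNReal (fun θ => exp (-(s * θ))) (Ici 0) := by
  refine LipschitzOnWith.of_dist_le_mul fun t ht u hu => ?_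
  rw [dist_eq_norm, dist_eq_norm, norm_eq_abs, norm_eq_abs, coe_toNNReal s hs]
  calc _ ≤ |s * t - s * u| := abs_exp_neg_sub_exp_neg_le (mul_nonneg hs ht) (mul_nonneg hs hu)
    _ = s * |t - u| := by rw [← mul_sub, abs_mul, abs_of_nonneg hs]

section Quadrature

variable {ρ g : ℝ → ℝ} {L : ℝ≥0}

lemma abs_integral_mul_sub_integral_mul_right_le {a b : ℝ} (hab : a ≤ b)
    (hρ : IntervalIntegrable ρ volume a b) (hρ0 : ∀ t ∈ Icc a b, 0 ≤ ρ t)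
    (hg : LipschitzOnWith L g (Icc a b)) :
    |(∫ t in a..b, ρ t * g t) - (∫ t in a..b, ρ t) * g b| ≤ L * (b - a) * ∫ t in a..b, ρ t := by
  have hgc : ContinuousOn g (uIcc a b) := uIcc_of_le hab ▸ hg.continuousOn
  have hb : b ∈ Icc a b := right_mem_Icc.2 hab
  have hsplit : (∫ t in a..b, ρ t * g t) - (∫ t in a..b, ρ t) * g b
      = ∫ t in a..b, ρ t * (g t - g b) := by
    simp only [mul_sub]
    rw [intervalIntegral.integral_sub (hρ.mul_continuousOn hgc) (hρ.mul_const _),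
      intervalIntegral.integral_mul_const]
  rw [hsplit, ← intervalIntegral.integral_const_mul, ← norm_eq_abs]
  refine intervalIntegral.norm_integral_le_of_norm_le hab (ae_of_all _ fun t ht => ?_)
    (hρ.const_mul _)
  have ht' : t ∈ Icc a b := Ioc_subset_Icc_self ht
  have hlip : |g t - g b| ≤ L * (b - a) := by
    have := hg.dist_le_mul t ht' b hb
    rw [dist_eq_norm, dist_eq_norm, norm_eq_abs, norm_eq_abs, abs_sub_comm t,
      abs_of_nonneg (sub_nonneg.2 ht'.2)] at this
    exact this.trans (by gcongr; exact ht.1.le)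
  rw [norm_eq_abs, abs_mul, abs_of_nonneg (hρ0 t ht'), mul_comm]
  exact mul_le_mul_of_nonneg_right hlip (hρ0 t ht')

lemma abs_integral_mul_sub_sum_le {x : ℕ → ℝ} {N : ℕ} {h : ℝ} (hx : Monotone x)
    (hmesh : ∀ i < N, x (i + 1) - x i ≤ h) (hρ : IntervalIntegrable ρ volume (x 0) (x N))
    (hρ0 : ∀ t ∈ Icc (x 0) (x N), 0 ≤ ρ t) (hg : LipschitzOnWith L g (Icc (x 0) (x N))) :
    |(∫ t in x 0..x N, ρ t * g t) -
        ∑ i ∈ Finset.range N, (∫ t in x i..x (i + 1), ρ t) * g (x (i + 1))| ≤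
      L * h * ∫ t in x 0..x N, ρ t := by
  have hcell : ∀ i < N, Icc (x i) (x (i + 1)) ⊆ Icc (x 0) (x N) := fun i hi =>
    Icc_subset_Icc (hx (Nat.zero_le i)) (hx hi)
  have hcell' : ∀ i < N, uIcc (x i) (x (i + 1)) ⊆ uIcc (x 0) (x N) := fun i hi => by
    rw [uIcc_of_le (hx (Nat.le_succ i)), uIcc_of_le (hx (Nat.zero_le N))]; exact hcell i hi
  have hρg : IntervalIntegrable (fun t => ρ t * g t) volume (x 0) (x N) :=
    hρ.mul_continuousOn (uIcc_of_le (hx (Nat.zero_le N)) ▸ hg.continuousOn)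
  rw [← intervalIntegral.sum_integral_adjacent_intervals fun i hi => hρg.mono_set (hcell' i hi),
    ← intervalIntegral.sum_integral_adjacent_intervals fun i hi => hρ.mono_set (hcell' i hi),
    Finset.mul_sum, ← Finset.sum_sub_distrib]
  refine (Finset.abs_sum_le_sum_abs _ _).trans (Finset.sum_le_sum fun i hi => ?_)
  have hi : i < N := Finset.mem_range.1 hi
  have hle : x i ≤ x (i + 1) := hx (Nat.le_succ i)
  calc _ ≤ L * (x (i + 1) - x i) * ∫ t in x i..x (i + 1), ρ t :=
        abs_integral_mul_sub_integral_mul_right_le hle (hρ.mono_set (hcell' i hi))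
          (fun t ht => hρ0 t (hcell i hi ht)) (hg.mono (hcell i hi))
    _ ≤ L * h * ∫ t in x i..x (i + 1), ρ t := by
        gcongr
        · exact intervalIntegral.integral_nonneg hle fun t ht => hρ0 t (hcell i hi ht)
        · exact hmesh i hi

end Quadrature

lemma omega_one_sub_eq_integral {α s : ℝ} (hα : 0 < α) (hΓ : Gamma (1 - α) ≠ 0) (hs : 0 < s) :
    omega (1 - α) s =
      (∫ θ in Ioi 0, θ ^ (α - 1) * exp (-(s * θ))) / (Gamma α * Gamma (1 - α)) := by
  rw [integral_rpow_mul_exp_neg_mul_Ioi hα hs, omega, one_div, inv_rpow hs.le,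
    show 1 - α - 1 = -α by ring, rpow_neg hs.le]
  field_simp [(Gamma_pos_of_pos hα).ne']

lemma integrableOn_rpow_mul_exp_neg_mul_Ioi {α s : ℝ} (hα : 0 < α) (hs : 0 < s) :
    IntegrableOn (fun θ => θ ^ (α - 1) * exp (-(s * θ))) (Ioi 0) := by
  simpa [rpow_one, neg_mul] using
    integrableOn_rpow_mul_exp_neg_mul_rpow (p := 1) (by linarith) one_pos hs

lemma setIntegral_Ioi_rpow_mul_exp_neg_mul_le {α b c s : ℝ} (hα : α ≤ 1) (hb : 1 ≤ b)
    (hc : 0 < c) (hcs : c ≤ s) :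
    ∫ θ in Ioi b, θ ^ (α - 1) * exp (-(s * θ)) ≤ exp (-(c * b)) / c := by
  have hexp : ∫ θ in Ioi b, exp (-c * θ) = exp (-(c * b)) / c := by
    rw [integral_exp_mul_Ioi (neg_lt_zero.2 hc), neg_mul, div_neg, neg_div, neg_neg]
  rw [← hexp]
  refine integral_mono_of_nonneg (ae_restrict_of_forall_mem measurableSet_Ioi fun θ hθ => ?_)
    (integrableOn_exp_mul_Ioi (neg_lt_zero.2 hc) b) (ae_restrict_of_forall_mem measurableSet_Ioi
      fun θ hθ => ?_)
  · exact mul_nonneg (rpow_nonneg (by linarith [mem_Ioi.1 hθ]) _) (exp_pos _).le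
  · have hθ1 : 1 ≤ θ := hb.trans (le_of_lt hθ)
    calc θ ^ (α - 1) * exp (-(s * θ)) ≤ 1 * exp (-c * θ) := by
          gcongr
          · exact rpow_le_one_of_one_le_of_nonpos hθ1 (by linarith)
          · rw [neg_mul, neg_le_neg_iff]; exact mul_le_mul_of_nonneg_right hcs (by linarith)
      _ = exp (-c * θ) := one_mul _

lemma exists_one_le_and_exp_neg_mul_div_le {c η : ℝ} (hc : 0 < c) (hη : 0 < η) :
    ∃ b, 1 ≤ b ∧ exp (-(c * b)) / c ≤ η := by
  have : Tendsto (fun b => exp (-(c * b)) / c) atTop (𝓝 0) := by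
    simpa using (tendsto_exp_atBot.comp (tendsto_neg_atTop_atBot.comp
      (tendsto_id.const_mul_atTop hc))).div_const c
  exact ((eventually_ge_atTop 1).and (this.eventually (ge_mem_nhds hη))).exists

lemma integral_rpow_sub_one_pos {α a b : ℝ} (hα : 0 < α) (ha : 0 ≤ a) (hab : a < b) :
    0 < ∫ θ in a..b, θ ^ (α - 1) :=
  intervalIntegral.intervalIntegral_pos_of_pos_on
    (intervalIntegral.intervalIntegrable_rpow' (by linarith))
    (fun θ hθ => rpow_pos_of_pos (ha.trans_lt hθ.1) _) hab

lemma integral_zero_rpow_sub_one {α b : ℝ} (hα : 0 < α) :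
    ∫ θ in (0 : ℝ)..b, θ ^ (α - 1) = b ^ α / α := by
  rw [integral_rpow (Or.inl (by linarith)), sub_add_cancel, zero_rpow hα.ne', sub_zero]

noncomputable def soeNode (b : ℝ) (N ℓ : ℕ) : ℝ := ℓ * b / N

noncomputable def soeWeight (α b : ℝ) (N ℓ : ℕ) : ℝ :=
  ∫ θ in soeNode b N (ℓ - 1)..soeNode b N ℓ, θ ^ (α - 1)

lemma soeNode_pos {b : ℝ} (hb : 0 < b) {N ℓ : ℕ} (hℓ : 1 ≤ ℓ) (hN : 1 ≤ N) :
    0 < soeNode b N ℓ := by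
  unfold soeNode; positivity

lemma soeWeight_pos {α b : ℝ} (hα : 0 < α) (hb : 0 < b) {N ℓ : ℕ} (hℓ : 1 ≤ ℓ) (hN : 1 ≤ N) :
    0 < soeWeight α b N ℓ := by
  refine integral_rpow_sub_one_pos hα (by unfold soeNode; positivity) ?_
  unfold soeNode; gcongr; omega

lemma abs_integral_rpow_mul_exp_neg_mul_sub_sum_le {α b s : ℝ} {N : ℕ} (hα : 0 < α)
    (hb : 0 ≤ b) (hs : 0 ≤ s) (hN : N ≠ 0) :
    |(∫ θ in (0 : ℝ)..b, θ ^ (α - 1) * exp (-(s * θ))) - ∑ i ∈ Finset.range N,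
        soeWeight α b N (i + 1) * exp (-(s * soeNode b N (i + 1)))| ≤
      s * (b / N) * (b ^ α / α) := by
  have hx : Monotone (soeNode b N) := fun i j hij => by unfold soeNode; gcongr
  have hx0 : soeNode b N 0 = 0 := by simp [soeNode]
  have hxN : soeNode b N N = b := by simp [soeNode, hN]
  have hmesh : ∀ i < N, soeNode b N (i + 1) - soeNode b N i ≤ b / N := fun i _ =>
    le_of_eq (by unfold soeNode; push_cast; ring)
  have key := abs_integral_mul_sub_sum_le (ρ := fun θ => θ ^ (α - 1)) hx hmesh
    (by rw [hx0, hxN]; exact intervalIntegral.intervalIntegrable_rpow' (by linarith))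
    (fun t ht => rpow_nonneg (hx0 ▸ ht.1) _)
    ((lipschitzOnWith_exp_neg_mul hs).mono (by rw [hx0]; exact Icc_subset_Ici_self))
  rwa [hx0, hxN, integral_zero_rpow_sub_one hα, coe_toNNReal s hs] at key

lemma abs_integral_Ioi_rpow_mul_exp_neg_mul_sub_sum_le {α b c s : ℝ} {N : ℕ} (hα₀ : 0 < α)
    (hα₁ : α ≤ 1) (hb : 1 ≤ b) (hN : N ≠ 0) (hc : 0 < c) (hcs : c ≤ s) :
    |(∫ θ in Ioi 0, θ ^ (α - 1) * exp (-(s * θ))) - ∑ ℓ ∈ Finset.Icc 1 N,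
        soeWeight α b N ℓ * exp (-(soeNode b N ℓ) * s)| ≤
      s * (b / N) * (b ^ α / α) + exp (-(c * b)) / c := by
  have hint := integrableOn_rpow_mul_exp_neg_mul_Ioi hα₀ (hc.trans_le hcs)
  have htail_nonneg : 0 ≤ ∫ θ in Ioi b, θ ^ (α - 1) * exp (-(s * θ)) :=
    setIntegral_nonneg measurableSet_Ioi fun θ hθ =>
      mul_nonneg (rpow_nonneg (by linarith [mem_Ioi.1 hθ]) _) (exp_pos _).le
  have hsum : ∑ ℓ ∈ Finset.Icc 1 N, soeWeight α b N ℓ * exp (-(soeNode b N ℓ) * s) =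
      ∑ i ∈ Finset.range N, soeWeight α b N (i + 1) * exp (-(s * soeNode b N (i + 1))) := by
    rw [← Finset.Ico_add_one_right_eq_Icc, Finset.sum_Ico_eq_sum_range, Nat.add_sub_cancel]
    simp_rw [add_comm 1, neg_mul, mul_comm s]
  rw [← intervalIntegral.integral_interval_add_Ioi (b := b) hint
    (hint.mono_set (Ioi_subset_Ioi (by linarith))), hsum, add_sub_right_comm]
  refine (abs_add_le _ _).trans (add_le_add ?_ ?_)
  · exact abs_integral_rpow_mul_exp_neg_mul_sub_sum_le hα₀ (by linarith) (hc.trans_le hcs).le hN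
  · rw [abs_of_nonneg htail_nonneg]
    exact setIntegral_Ioi_rpow_mul_exp_neg_mul_le hα₁ hb hc hcs

theorem soe_approximation_general
    (α ε Δt T : ℝ) (hα0 : 0 < α) (hα1 : α < 1) (hε : 0 < ε)
    (hΔt : 0 < Δt) :
    ∃ (Nq : ℕ) (θ ϖ : ℕ → ℝ), 1 ≤ Nq ∧
      (∀ ℓ, 1 ≤ ℓ → ℓ ≤ Nq → 0 < θ ℓ ∧ 0 < ϖ ℓ) ∧
      ∀ s ∈ Set.Icc Δt T,
        |omega (1 - α) s - ∑ ℓ ∈ Finset.Icc 1 Nq, ϖ ℓ * Real.exp (-(θ ℓ) * s)| ≤ ε := by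
  have hΓ : 0 < Gamma (1 - α) := Gamma_pos_of_pos (by linarith)
  set C := Gamma α * Gamma (1 - α) with hC_def
  have hC : 0 < C := mul_pos (Gamma_pos_of_pos hα0) hΓ
  have hη : 0 < ε * C / 2 := by positivity
  obtain ⟨b, hb1, hb⟩ := exists_one_le_and_exp_neg_mul_div_le hΔt hη
  obtain ⟨N, hN1, hN⟩ : ∃ N : ℕ, 1 ≤ N ∧ T * (b / N) * (b ^ α / α) ≤ ε * C / 2 := by
    have : Tendsto (fun N : ℕ => T * (b / N) * (b ^ α / α)) atTop (𝓝 0) := by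
      simpa using ((tendsto_const_div_atTop_nhds_zero_nat b).const_mul T).mul_const (b ^ α / α)
    exact ((eventually_ge_atTop 1).and (this.eventually (ge_mem_nhds hη))).exists
  refine ⟨N, soeNode b N, fun ℓ => soeWeight α b N ℓ / C, hN1, fun ℓ hℓ _ =>
    ⟨soeNode_pos (by linarith) hℓ hN1, div_pos (soeWeight_pos hα0 (by linarith) hℓ hN1) hC⟩, ?_⟩
  rintro s ⟨hs1, hs2⟩
  have hsum : ∑ ℓ ∈ Finset.Icc 1 N, soeWeight α b N ℓ / C * exp (-(soeNode b N ℓ) * s) =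
      (∑ ℓ ∈ Finset.Icc 1 N, soeWeight α b N ℓ * exp (-(soeNode b N ℓ) * s)) / C := by
    simp_rw [Finset.sum_div, div_mul_eq_mul_div]
  rw [omega_one_sub_eq_integral hα0 hΓ.ne' (hΔt.trans_le hs1), ← hC_def, hsum, div_sub_div_same,
    abs_div, abs_of_pos hC, div_le_iff₀ hC]
  calc _ ≤ s * (b / N) * (b ^ α / α) + exp (-(Δt * b)) / Δt :=
        abs_integral_Ioi_rpow_mul_exp_neg_mul_sub_sum_le hα0 hα1.le hb1 (by omega) hΔt hs1
    _ ≤ T * (b / N) * (b ^ α / α) + ε * C / 2 := by gcongr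
    _ ≤ ε * C := by linarith

theorem soe_approximation
    (α ε Δt T : ℝ) (hα0 : 0 < α) (hα1 : α < 1) (hε : 0 < ε)
    (hΔt : 0 < Δt) (hΔtT : Δt < T) :
    ∃ (Nq : ℕ) (θ ϖ : ℕ → ℝ), 1 ≤ Nq ∧
      (∀ ℓ, 1 ≤ ℓ → ℓ ≤ Nq → 0 < θ ℓ ∧ 0 < ϖ ℓ) ∧
      ∀ s ∈ Set.Icc Δt T,
        |omega (1 - α) s - ∑ ℓ ∈ Finset.Icc 1 Nq, ϖ ℓ * Real.exp (-(θ ℓ) * s)| ≤ ε :=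
  soe_approximation_general α ε Δt T hα0 hα1 hε hΔt
end

section
/- Assume the sum-of-exponentials tolerance satisfies ϵ ≤ min{ ω_{1−α}(T)/3, α·ω_{2−α}(1) }. Then A^{(n)}_0 = a^{(n)}_0 and the fast L1 kernels dominate two thirds of the exact L1 kernels: A^{(n)}_{n−k} ≥ (2/3) a^{(n)}_{n−k} for all 1 ≤ k ≤ n − 1 ≤ N − 1. -/
open Real MeasureTheory

/-- The nonuniform L1 kernel `a^{(n)}_{n−k}` (here indexed by the step `k`:
`L1kernel α t n k = a^{(n)}_{n−k}`). -/
noncomputable def L1kernel (α : ℝ) (t : ℕ → ℝ) (n k : ℕ) : ℝ :=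
  (1 / (t k - t (k - 1))) * ∫ s in (t (k - 1))..(t k), omega (1 - α) (t n - s)

/-- The fast L1 kernel `A^{(n)}_{n−k}`, indexed by the step `k`:
`fastKernel α t Nq θ ϖ n k = A^{(n)}_{n−k}`.  In particular
`fastKernel α t Nq θ ϖ n n = A^{(n)}_0 := a^{(n)}_0`, while for `1 ≤ k ≤ n−1`,
`A^{(n)}_{n−k} := (1/τ_k) ∫_{t_{k−1}}^{t_k} Σ_ℓ ϖ^ℓ e^{−θ^ℓ(t_n − s)} ds`. -/
noncomputable def fastKernel (α : ℝ) (t : ℕ → ℝ) (Nq : ℕ) (θ ϖ : ℕ → ℝ)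
    (n k : ℕ) : ℝ :=
  if k = n then L1kernel α t n n
  else (1 / (t k - t (k - 1))) *
    ∫ s in (t (k - 1))..(t k), ∑ ℓ ∈ Finset.Icc 1 Nq, ϖ ℓ * Real.exp (-(θ ℓ) * (t n - s))

/-!
For `s ∈ [t_{k−1}, t_k]` and `k < n` the lag `t_n − s` lies in `[τ_{k+1}, T]`, where the sum of
exponentials is `ϵ`-close to `ω_{1−α}`. As `ω_{1−α}` is decreasing, `ϵ ≤ ω_{1−α}(T)/3 ≤
ω_{1−α}(t_n − s)/3`, so the integrand of `A^{(n)}_{n−k}` dominates `2/3` of that of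
`a^{(n)}_{n−k}` pointwise; averaging over `[t_{k−1}, t_k]` gives the claim. For `k = n` the two
kernels agree by definition.
-/

open Set

lemma omega_antitoneOn {μ : ℝ} (hμ0 : 0 < μ) (hμ1 : μ ≤ 1) : AntitoneOn (omega μ) (Ioi 0) :=
  fun _ hx _ _ hxy => div_le_div_of_nonneg_right
    (rpow_le_rpow_of_nonpos hx hxy (by linarith)) (Gamma_pos_of_pos hμ0).le

lemma continuousOn_omega (μ : ℝ) : ContinuousOn (omega μ) (Ioi 0) :=
  (continuousOn_id.rpow_const fun _ hx => Or.inl (ne_of_gt hx)).div_const _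

lemma mul_intervalAverage_le_of_mul_le {f g : ℝ → ℝ} {a b c : ℝ} (hab : a ≤ b)
    (hf : IntervalIntegrable f volume a b) (hg : IntervalIntegrable g volume a b)
    (hfg : ∀ x ∈ Icc a b, c * f x ≤ g x) :
    c * ((1 / (b - a)) * ∫ x in a..b, f x) ≤ (1 / (b - a)) * ∫ x in a..b, g x := by
  have hint : c * ∫ x in a..b, f x ≤ ∫ x in a..b, g x := by
    rw [← intervalIntegral.integral_const_mul]
    exact intervalIntegral.integral_mono_on hab (hf.const_mul c) hg hfg
  rw [mul_left_comm]
  exact mul_le_mul_of_nonneg_left hint (one_div_nonneg.mpr (sub_nonneg.mpr hab))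

lemma two_thirds_omega_le_of_abs_sub_le {μ T ϵ x y : ℝ} (hμ0 : 0 < μ) (hμ1 : μ ≤ 1)
    (hx : 0 < x) (hxT : x ≤ T) (hy : |omega μ x - y| ≤ ϵ)
    (hϵ : ϵ ≤ omega μ T / 3) : 2 / 3 * omega μ x ≤ y := by
  have hωT : omega μ T ≤ omega μ x := omega_antitoneOn hμ0 hμ1 hx (hx.trans_le hxT) hxT
  linarith [(abs_sub_le_iff.mp hy).1]

theorem fast_L1_kernels_two_thirds_general
    (α T : ℝ) (hα0 : 0 < α) (hα1 : α < 1)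
    (N : ℕ)
    (t : ℕ → ℝ) (ht0 : t 0 = 0) (htN : t N = T)
    (hmesh : ∀ k, k < N → t k < t (k + 1))
    (ϵ : ℝ)
    (Nq : ℕ) (θ ϖ : ℕ → ℝ)
    -- the SOE approximation is accurate within `ϵ` on `[min_{1≤k≤N} τ_k, T]`
    (hsoe : ∀ s : ℝ, (∃ k, 1 ≤ k ∧ k ≤ N ∧ t k - t (k - 1) ≤ s) → s ≤ T →
      |omega (1 - α) s - ∑ ℓ ∈ Finset.Icc 1 Nq, ϖ ℓ * Real.exp (-(θ ℓ) * s)| ≤ ϵ)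
    -- the tolerance satisfies `ϵ ≤ min{ ω_{1−α}(T)/3, α ω_{2−α}(1) }`
    (hϵsmall : ϵ ≤ min (omega (1 - α) T / 3) (α * omega (2 - α) 1)) :
    -- `A^{(n)}_0 = a^{(n)}_0` and `A^{(n)}_{n−k} ≥ (2/3) a^{(n)}_{n−k}`
    -- for `1 ≤ k ≤ n − 1 ≤ N − 1`.
    (∀ n, 1 ≤ n → n ≤ N → fastKernel α t Nq θ ϖ n n = L1kernel α t n n) ∧
    (∀ n k, 1 ≤ k → k + 1 ≤ n → n ≤ N →
      (2 / 3 : ℝ) * L1kernel α t n k ≤ fastKernel α t Nq θ ϖ n k) := by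
  refine ⟨fun n _ _ => if_pos rfl, fun n k hk hkn hnN => ?_⟩
  have ht : MonotoneOn t (Iic N) := (strictMonoOn_Iic_of_lt_succ hmesh).monotoneOn
  have hmono : ∀ i j, i ≤ j → j ≤ N → t i ≤ t j := fun i j hij hj =>
    ht (mem_Iic.mpr (hij.trans hj)) (mem_Iic.mpr hj) hij
  have hk' : k - 1 + 1 = k := by omega
  have hτ : t (k - 1) < t k := hk' ▸ hmesh (k - 1) (by omega)
  have hτ' : t k < t (k + 1) := hmesh k (by omega)
  have hlag : ∀ s ∈ Icc (t (k - 1)) (t k),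
      t (k + 1) - t k ≤ t n - s ∧ t n - s ≤ T := fun s hs => by
    have := hmono (k + 1) n hkn hnN
    have := hmono 0 (k - 1) (Nat.zero_le _) (by omega)
    have := hmono n N hnN le_rfl
    constructor <;> linarith [hs.1, hs.2]
  rw [L1kernel, fastKernel, if_neg (by omega)]
  refine mul_intervalAverage_le_of_mul_le hτ.le ?_ ?_ fun s hs => ?_
  · refine ContinuousOn.intervalIntegrable_of_Icc hτ.le ?_
    refine (continuousOn_omega _).comp (by fun_prop) fun s hs => mem_Ioi.mpr ?_
    linarith [(hlag s hs).1]
  · exact Continuous.intervalIntegrable (by fun_prop) _ _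
  · obtain ⟨hlow, hup⟩ := hlag s hs
    refine two_thirds_omega_le_of_abs_sub_le (by linarith) (by linarith) (by linarith) hup ?_
      (hϵsmall.trans (min_le_left _ _))
    exact hsoe _ ⟨k + 1, by omega, by omega, by simpa using hlow⟩ hup

theorem fast_L1_kernels_two_thirds
    (α T : ℝ) (hα0 : 0 < α) (hα1 : α < 1)
    (N : ℕ) (hN : 1 ≤ N)
    (t : ℕ → ℝ) (ht0 : t 0 = 0) (htN : t N = T)
    (hmesh : ∀ k, k < N → t k < t (k + 1))
    (ϵ : ℝ) (hϵ0 : 0 < ϵ)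
    (Nq : ℕ) (hNq : 1 ≤ Nq) (θ ϖ : ℕ → ℝ)
    (hθ : ∀ ℓ, 1 ≤ ℓ → ℓ ≤ Nq → 0 < θ ℓ)
    (hϖ : ∀ ℓ, 1 ≤ ℓ → ℓ ≤ Nq → 0 < ϖ ℓ)
    -- the SOE approximation is accurate within `ϵ` on `[min_{1≤k≤N} τ_k, T]`
    (hsoe : ∀ s : ℝ, (∃ k, 1 ≤ k ∧ k ≤ N ∧ t k - t (k - 1) ≤ s) → s ≤ T →
      |omega (1 - α) s - ∑ ℓ ∈ Finset.Icc 1 Nq, ϖ ℓ * Real.exp (-(θ ℓ) * s)| ≤ ϵ)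
    -- the tolerance satisfies `ϵ ≤ min{ ω_{1−α}(T)/3, α ω_{2−α}(1) }`
    (hϵsmall : ϵ ≤ min (omega (1 - α) T / 3) (α * omega (2 - α) 1)) :
    -- `A^{(n)}_0 = a^{(n)}_0` and `A^{(n)}_{n−k} ≥ (2/3) a^{(n)}_{n−k}`
    -- for `1 ≤ k ≤ n − 1 ≤ N − 1`.
    (∀ n, 1 ≤ n → n ≤ N → fastKernel α t Nq θ ϖ n n = L1kernel α t n n) ∧
    (∀ n k, 1 ≤ k → k + 1 ≤ n → n ≤ N →
      (2 / 3 : ℝ) * L1kernel α t n k ≤ fastKernel α t Nq θ ϖ n k) :=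
  fast_L1_kernels_two_thirds_general α T hα0 hα1 N t ht0 htN hmesh ϵ Nq θ ϖ hsoe hϵsmall
end

section
/- Let B be a real M × M matrix whose entries satisfy b_{ii} = −max_{1≤r≤M} Σ_{j≠r} |b_{rj}| for every i, let a > 0 and set A := aI − B. Then for every c > 0 and every V ∈ ℝ^M one has ‖AV + cV³‖∞ ≥ a‖V‖∞ + c‖V‖∞³, where V³ denotes the componentwise cube and ‖V‖∞ := max_{1≤i≤M} |V_i|. -/
/-!
Pick a coordinate `i` at which `|V i| = ‖V‖`. Since `-b_{ii}` dominates the off-diagonal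
absolute row sum of row `i`, the product `V i * (B V) i` is nonpositive, so
`V i * (AV + cV³) i ≥ a V_i² + c V_i⁴ = ‖V‖ (a‖V‖ + c‖V‖³)`,
while the left-hand side is at most `‖V‖ ‖AV + cV³‖`.
-/

open Finset Matrix

section
variable {n : Type*} [Fintype n]

theorem abs_apply_eq_norm_of_forall_abs_le {V : n → ℝ} {i : n} (hi : ∀ j, |V j| ≤ |V i|) :
    |V i| = ‖V‖ := by
  refine le_antisymm (Real.norm_eq_abs (V i) ▸ norm_le_pi_norm V i) ?_
  exact (pi_norm_le_iff_of_nonneg (abs_nonneg _)).2 fun j => (Real.norm_eq_abs _).trans_le (hi j)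

theorem mul_mulVec_apply_nonpos [DecidableEq n] {B : Matrix n n ℝ} {V : n → ℝ} {i : n}
    (hB : ∑ j ∈ univ.erase i, |B i j| ≤ -B i i) (hV : ∀ j, |V j| ≤ |V i|) :
    V i * (B *ᵥ V) i ≤ 0 := by
  have hoff : ∑ j ∈ univ.erase i, V i * (B i j * V j) ≤
      (∑ j ∈ univ.erase i, |B i j|) * V i ^ 2 := by
    rw [sum_mul]
    refine sum_le_sum fun j _ => ?_
    calc V i * (B i j * V j) ≤ |V i * (B i j * V j)| := le_abs_self _
      _ = |B i j| * (|V i| * |V j|) := by rw [abs_mul, abs_mul]; ring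
      _ ≤ |B i j| * (|V i| * |V i|) := by gcongr |B i j| * (|V i| * ?_); exact hV j
      _ = |B i j| * V i ^ 2 := by rw [← sq, sq_abs]
  have hdiag : V i * (B *ᵥ V) i =
      B i i * V i ^ 2 + ∑ j ∈ univ.erase i, V i * (B i j * V j) := by
    rw [mulVec, dotProduct, mul_sum, ← add_sum_erase _ _ (mem_univ i)]
    ring
  rw [hdiag]
  linarith [mul_le_mul_of_nonneg_right hB (sq_nonneg (V i))]

theorem le_norm_of_mul_apply_le {V W : n → ℝ} {i : n} {t : ℝ} (hi : |V i| = ‖V‖)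
    (hV : 0 < ‖V‖) (h : ‖V‖ * t ≤ V i * W i) : t ≤ ‖W‖ := by
  refine le_of_mul_le_mul_left (h.trans ?_) hV
  calc V i * W i ≤ |V i| * |W i| := (le_abs_self _).trans (abs_mul _ _).le
    _ ≤ ‖V‖ * ‖W‖ := by
      rw [hi, ← Real.norm_eq_abs]
      gcongr
      exact norm_le_pi_norm W i

end

theorem matrix_inf_norm_lower_bound_cubic_general
    (M : ℕ) (B : Matrix (Fin M) (Fin M) ℝ)
    (hB : ∀ i : Fin M,
      IsGreatest {x : ℝ | ∃ r : Fin M, x = ∑ j ∈ Finset.univ.erase r, |B r j|}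
        (-(B i i)))
    (a : ℝ) (c : ℝ) (V : Fin M → ℝ) :
    a * ‖V‖ + c * ‖V‖ ^ 3 ≤
      ‖(a • (1 : Matrix (Fin M) (Fin M) ℝ) - B).mulVec V +
        c • (fun i => (V i) ^ 3)‖ := by
  rcases (norm_nonneg V).eq_or_lt with hV | hV
  · rw [← hV]
    simp
  obtain ⟨j, -⟩ := Function.ne_iff.mp (norm_pos_iff.mp hV)
  have : Nonempty (Fin M) := ⟨j⟩
  obtain ⟨i, hmax⟩ := Finite.exists_max fun j => |V j|
  have hi := abs_apply_eq_norm_of_forall_abs_le hmax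
  have hBV := mul_mulVec_apply_nonpos ((hB i).2 ⟨i, rfl⟩) hmax
  refine le_norm_of_mul_apply_le hi hV ?_
  have hsq : ‖V‖ ^ 2 = V i ^ 2 := by rw [← hi, sq_abs]
  simp only [sub_mulVec, smul_mulVec, one_mulVec, Pi.add_apply, Pi.sub_apply, Pi.smul_apply,
    smul_eq_mul]
  calc ‖V‖ * (a * ‖V‖ + c * ‖V‖ ^ 3) = a * V i ^ 2 + c * (V i ^ 2) ^ 2 := by
        rw [← hsq]; ring
    _ ≤ V i * (a * V i - (B *ᵥ V) i + c * V i ^ 3) := by linarith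

theorem matrix_inf_norm_lower_bound_cubic
    (M : ℕ) (B : Matrix (Fin M) (Fin M) ℝ)
    (hB : ∀ i : Fin M,
      IsGreatest {x : ℝ | ∃ r : Fin M, x = ∑ j ∈ Finset.univ.erase r, |B r j|}
        (-(B i i)))
    (a : ℝ) (ha : 0 < a) (c : ℝ) (hc : 0 < c) (V : Fin M → ℝ) :
    a * ‖V‖ + c * ‖V‖ ^ 3 ≤
      ‖(a • (1 : Matrix (Fin M) (Fin M) ℝ) - B).mulVec V +
        c • (fun i => (V i) ^ 3)‖ :=
  matrix_inf_norm_lower_bound_cubic_general M B hB a c V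
end

section
/- Let n ≥ 1 and let A^{(n)}_0 > A^{(n)}_1 > ⋯ > A^{(n)}_{n−1} > 0 be positive decreasing reals. Let D be a real M × M matrix with d_{ii} = −max_{1≤r≤M} Σ_{j≠r} |d_{rj}| for every i, and let κ ≥ 0. Then for any vectors e⁰, e¹, …, e^n ∈ ℝ^M one has ‖ Σ_{k=1}^n A^{(n)}_{n−k}(e^k − e^{k−1}) − κ² D e^n ‖∞ ≥ Σ_{k=1}^n A^{(n)}_{n−k}( ‖e^k‖∞ − ‖e^{k−1}‖∞ ). -/
/-!
Fix a coordinate `i` at which `|e n i| = ‖e n‖` and let `σ` be the sign of `e n i`. The diagonal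
condition on `D` gives `σ * (D *ᵥ e n) i ≤ 0`, so the `κ²`-term can only increase the `i`-th
coordinate of the left-hand vector after multiplication by `σ`. The sequence
`σ * e k i - ‖e k‖` is nonpositive and vanishes at `k = n`; summation by parts against the
nonnegative, nonincreasing weights `A (n - k)` turns this into the claimed inequality.
-/

open Finset

theorem mul_sub_le_sum_range_mul_succ_sub {w g : ℕ → ℝ} {n : ℕ}
    (hw : ∀ j, j + 1 < n → w j ≤ w (j + 1)) (hg : ∀ j ≤ n, g j ≤ g n) :
    w 0 * (g n - g 0) ≤ ∑ j ∈ range n, w j * (g (j + 1) - g j) := by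
  induction n generalizing w g with
  | zero => simp
  | succ n ih =>
    have ih' := ih (w := (w ∘ (· + 1))) (g := (g ∘ (· + 1)))
      (fun j hj => hw (j + 1) (by omega)) (fun j hj => hg (j + 1) (by omega))
    simp only [Function.comp_apply, zero_add] at ih'
    rw [sum_range_succ']
    rcases Nat.eq_zero_or_pos n with rfl | hn
    · simp
    -- what remains is `0 ≤ (w 1 - w 0) * (g (n + 1) - g 1)`
    · nlinarith [hw 0 (by omega), hg 1 (by omega)]

theorem sum_Icc_mul_sub_eq_sum_range (A g : ℕ → ℝ) (n : ℕ) :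
    ∑ k ∈ Icc 1 n, A (n - k) * (g k - g (k - 1)) =
      ∑ j ∈ range n, A (n - 1 - j) * (g (j + 1) - g j) := by
  rw [← Ico_add_one_right_eq_Icc, sum_Ico_eq_sum_range, Nat.add_sub_cancel]
  refine sum_congr rfl fun j _ => ?_
  rw [add_comm 1 j, Nat.add_sub_cancel, Nat.sub_sub, add_comm 1 j]

theorem sum_Icc_mul_sub_nonneg {A g : ℕ → ℝ} {n : ℕ} (hA0 : ∀ j < n, 0 ≤ A j)
    (hA : ∀ j, j + 1 < n → A (j + 1) ≤ A j) (hg : ∀ k ≤ n, g k ≤ g n) :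
    0 ≤ ∑ k ∈ Icc 1 n, A (n - k) * (g k - g (k - 1)) := by
  rw [sum_Icc_mul_sub_eq_sum_range]
  rcases Nat.eq_zero_or_pos n with rfl | hn
  · simp
  · refine (mul_nonneg (hA0 (n - 1) (by omega)) (sub_nonneg.2 (hg 0 (by omega)))).trans
      (mul_sub_le_sum_range_mul_succ_sub (w := fun j => A (n - 1 - j)) (fun j hj => ?_) hg)
    convert hA (n - 2 - j) (by omega) using 2 <;> omega

theorem sum_Icc_mul_sub_le {A a b : ℕ → ℝ} {n : ℕ} (hA0 : ∀ j < n, 0 ≤ A j)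
    (hA : ∀ j, j + 1 < n → A (j + 1) ≤ A j) (hab : ∀ k ≤ n, a k - b k ≤ a n - b n) :
    ∑ k ∈ Icc 1 n, A (n - k) * (b k - b (k - 1)) ≤
      ∑ k ∈ Icc 1 n, A (n - k) * (a k - a (k - 1)) := by
  have := sum_Icc_mul_sub_nonneg hA0 hA (g := a - b) hab
  rw [← sub_nonneg, ← sum_sub_distrib]
  convert this using 2 with k
  simp only [Pi.sub_apply]
  ring

section SupNorm

variable {ι : Type*} [Fintype ι]

theorem abs_mul_apply_le_pi_norm {σ : ℝ} (hσ : |σ| ≤ 1) (y : ι → ℝ) (i : ι) :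
    |σ * y i| ≤ ‖y‖ :=
  calc |σ * y i| = |σ| * ‖y i‖ := abs_mul σ (y i)
    _ ≤ ‖y i‖ := mul_le_of_le_one_left (norm_nonneg _) hσ
    _ ≤ ‖y‖ := norm_le_pi_norm y i

theorem exists_mul_apply_eq_pi_norm [Nonempty ι] (x : ι → ℝ) :
    ∃ i, ∃ σ : ℝ, |σ| ≤ 1 ∧ σ * x i = ‖x‖ := by
  obtain ⟨i, hi⟩ := (IsGreatest.pi_norm x).1
  refine ⟨i, SignType.sign (x i), ?_, by rw [sign_mul_self, ← Real.norm_eq_abs]; exact hi⟩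
  cases SignType.sign (x i) <;> simp

theorem mul_mulVec_apply_nonpos_s10 [DecidableEq ι] {D : Matrix ι ι ℝ} {x : ι → ℝ} {i : ι}
    {σ : ℝ} (hD : ∑ j ∈ univ.erase i, |D i j| ≤ -D i i) (hσ : |σ| ≤ 1)
    (hx : σ * x i = ‖x‖) : σ * D.mulVec x i ≤ 0 := by
  have hoff : ∑ j ∈ univ.erase i, D i j * (σ * x j) ≤ (∑ j ∈ univ.erase i, |D i j|) * ‖x‖ := by
    rw [sum_mul]
    refine sum_le_sum fun j _ => (le_abs_self _).trans ?_
    rw [abs_mul]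
    exact mul_le_mul_of_nonneg_left (abs_mul_apply_le_pi_norm hσ x j) (abs_nonneg _)
  calc σ * D.mulVec x i = D i i * ‖x‖ + ∑ j ∈ univ.erase i, D i j * (σ * x j) := by
        rw [Matrix.mulVec, dotProduct, mul_sum, ← add_sum_erase _ _ (mem_univ i), ← hx]
        ring_nf
    _ ≤ 0 := by nlinarith [norm_nonneg x]

end SupNorm

theorem convolution_maximum_norm_transfer_general
    (n M : ℕ)
    (A : ℕ → ℝ)
    (hApos : ∀ j, j < n → 0 < A j)
    (hAdec : ∀ j, j + 1 < n → A (j + 1) < A j)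
    (D : Matrix (Fin M) (Fin M) ℝ)
    (hDdiag : ∀ i : Fin M,
      IsGreatest {x : ℝ | ∃ r : Fin M, x = ∑ j ∈ Finset.univ.erase r, |D r j|}
        (-(D i i)))
    (κ : ℝ)
    (e : ℕ → Fin M → ℝ) :
    ∑ k ∈ Finset.Icc 1 n, A (n - k) * (‖e k‖ - ‖e (k - 1)‖) ≤
      ‖(∑ k ∈ Finset.Icc 1 n, A (n - k) • (e k - e (k - 1)))
        - κ ^ 2 • D.mulVec (e n)‖ := by
  rcases isEmpty_or_nonempty (Fin M) with hM | hM
  · simp [Subsingleton.elim _ (0 : Fin M → ℝ)]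
  obtain ⟨i, σ, hσ, hσi⟩ := exists_mul_apply_eq_pi_norm (e n)
  have hD := mul_mulVec_apply_nonpos_s10 ((hDdiag i).2 ⟨i, rfl⟩) hσ hσi
  set F := (∑ k ∈ Finset.Icc 1 n, A (n - k) • (e k - e (k - 1))) - κ ^ 2 • D.mulVec (e n)
  calc ∑ k ∈ Icc 1 n, A (n - k) * (‖e k‖ - ‖e (k - 1)‖)
      ≤ ∑ k ∈ Icc 1 n, A (n - k) * (σ * e k i - σ * e (k - 1) i) := by
        refine sum_Icc_mul_sub_le (fun j hj => (hApos j hj).le)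
          (fun j hj => (hAdec j hj).le) fun k _ => ?_
        rw [hσi, sub_self, sub_nonpos]
        exact (le_abs_self _).trans (abs_mul_apply_le_pi_norm hσ _ i)
    _ = σ * (∑ k ∈ Icc 1 n, A (n - k) • (e k - e (k - 1))) i := by
        simp only [Finset.sum_apply, Pi.smul_apply, Pi.sub_apply, smul_eq_mul, mul_sum]
        exact sum_congr rfl fun _ _ => by ring
    _ = σ * F i + κ ^ 2 * (σ * D.mulVec (e n) i) := by
        simp only [F, Pi.sub_apply, Pi.smul_apply, smul_eq_mul]
        ring
    _ ≤ σ * F i := by nlinarith [sq_nonneg κ]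
    _ ≤ ‖F‖ := (le_abs_self _).trans (abs_mul_apply_le_pi_norm hσ F i)

theorem convolution_maximum_norm_transfer
    (n M : ℕ) (hn : 1 ≤ n)
    (A : ℕ → ℝ)
    (hApos : ∀ j, j < n → 0 < A j)
    (hAdec : ∀ j, j + 1 < n → A (j + 1) < A j)
    (D : Matrix (Fin M) (Fin M) ℝ)
    (hDdiag : ∀ i : Fin M,
      IsGreatest {x : ℝ | ∃ r : Fin M, x = ∑ j ∈ Finset.univ.erase r, |D r j|}
        (-(D i i)))
    (κ : ℝ) (hκ : 0 ≤ κ)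
    (e : ℕ → Fin M → ℝ) :
    ∑ k ∈ Finset.Icc 1 n, A (n - k) * (‖e k‖ - ‖e (k - 1)‖) ≤
      ‖(∑ k ∈ Finset.Icc 1 n, A (n - k) • (e k - e (k - 1)))
        - κ ^ 2 • D.mulVec (e n)‖ :=
  convolution_maximum_norm_transfer_general n M A hApos hAdec D hDdiag κ e
end

section
/- Let the discrete convolution kernels A^{(n)}_{n−k} (1 ≤ k ≤ n ≤ N) be positive and monotone, i.e. A^{(n)}_{n−k} > 0 and A^{(n)}_{n−k−1} ≥ A^{(n)}_{n−k} for 1 ≤ k ≤ n − 1. Define the complementary kernels by p^{(n)}_0 := 1/A^{(n)}_0 and p^{(n)}_{n−j} := (1/A^{(j)}_0) Σ_{k=j+1}^{n} (A^{(k)}_{k−j−1} − A^{(k)}_{k−j}) p^{(n)}_{n−k} for 1 ≤ j ≤ n − 1. Then p^{(n)}_{n−j} ≥ 0 for all 1 ≤ j ≤ n ≤ N, and the orthogonality identity Σ_{j=k}^{n} p^{(n)}_{n−j} A^{(j)}_{j−k} = 1 holds for all 1 ≤ k ≤ n ≤ N. -/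
/-!
STATEMENT 11: nonnegativity of the discrete complementary convolution kernels
and the orthogonality identity.  Throughout, `A n k` denotes the kernel
`A^{(n)}_{n−k}` (the coefficient of the step `k`), so monotonicity
`A^{(n)}_{n−k−1} ≥ A^{(n)}_{n−k}` reads `A n (k+1) ≥ A n k`, and
`A^{(j)}_{j−k} = A j k`.
-/

/-- The discrete complementary convolution kernels `p^{(n)}_m` associated with
a family of kernels.  Here `A n k` denotes the kernel `A^{(n)}_{n−k}`
(the coefficient of the step `k` in `Σ_{k=1}^n A^{(n)}_{n−k} ∇v^k`), and
`compP A n m = p^{(n)}_m`, defined by `p^{(n)}_0 := 1/A^{(n)}_0` and, for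
`j = n − (m+1)`,
`p^{(n)}_{n−j} := (1/A^{(j)}_0) Σ_{k=j+1}^n (A^{(k)}_{k−j−1} − A^{(k)}_{k−j}) p^{(n)}_{n−k}`;
note `A^{(j)}_0 = A j j`, `A^{(k)}_{k−j} = A k j` and `A^{(k)}_{k−j−1} = A k (j+1)`. -/
noncomputable def compP (A : ℕ → ℕ → ℝ) (n : ℕ) : ℕ → ℝ
  | 0 => 1 / A n n
  | (m + 1) =>
      (1 / A (n - (m + 1)) (n - (m + 1))) *
        ∑ k ∈ (Finset.Icc (n - (m + 1) + 1) n).attach,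
          (A k.1 (n - (m + 1) + 1) - A k.1 (n - (m + 1))) * compP A n (n - k.1)
  decreasing_by
    have hk := Finset.mem_Icc.mp k.2
    omega

/-!
Read `compP A n (n - j)` as the kernel `p_j` attached to the step `j`. The defining recursion
expresses `p_j` through `p_{j+1}, …, p_n` with the weights `A k (j+1) - A k j ≥ 0`, so downward
induction on `j` gives `p_j ≥ 0`. The same recursion says exactly that the orthogonality sum
`S_k = ∑_{j=k}^n p_j A j k` does not change when `k` is replaced by `k + 1`; hence `S_k = S_n = 1`.
-/

open Finset

section ComplementaryKernels

variable {A : ℕ → ℕ → ℝ} {n j k : ℕ}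

theorem compP_sub_of_lt (h : j < n) :
    compP A n (n - j) =
      1 / A j j * ∑ k ∈ Icc (j + 1) n, (A k (j + 1) - A k j) * compP A n (n - k) := by
  obtain ⟨m, hm⟩ : ∃ m, n - j = m + 1 := ⟨n - j - 1, by omega⟩
  have hj : n - (m + 1) = j := by omega
  rw [hm, compP, hj, sum_attach (Icc (j + 1) n)
    (fun k => (A k (j + 1) - A k j) * compP A n (n - k))]

theorem compP_sub_nonneg (hdiag : ∀ i, 1 ≤ i → i ≤ n → 0 ≤ A i i)
    (hmono : ∀ k i, 1 ≤ i → i < k → k ≤ n → A k i ≤ A k (i + 1)) (hj : 1 ≤ j) (hjn : j ≤ n) :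
    0 ≤ compP A n (n - j) := by
  induction h : n - j using Nat.strong_induction_on generalizing j with
  | _ d ih =>
    subst h
    rcases hjn.eq_or_lt with rfl | hlt
    · rw [Nat.sub_self, compP]
      exact one_div_nonneg.2 (hdiag j hj le_rfl)
    · rw [compP_sub_of_lt hlt]
      refine mul_nonneg (one_div_nonneg.2 (hdiag j hj hjn)) (sum_nonneg fun k hk => ?_)
      obtain ⟨hjk, hkn⟩ := mem_Icc.1 hk
      exact mul_nonneg (sub_nonneg.2 (hmono k j hj hjk hkn)) (ih _ (by omega) (by omega) hkn rfl)

theorem sum_compP_mul_eq_sum_compP_mul_succ (hk : A k k ≠ 0) (hkn : k < n) :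
    ∑ j ∈ Icc k n, compP A n (n - j) * A j k =
      ∑ j ∈ Icc (k + 1) n, compP A n (n - j) * A j (k + 1) := by
  rw [← insert_Icc_add_one_left_eq_Icc hkn.le, sum_insert (by simp), compP_sub_of_lt hkn,
    mul_comm (1 / A k k), mul_assoc, one_div_mul_cancel hk, mul_one, ← sum_add_distrib]
  exact sum_congr rfl fun j _ => by ring

theorem sum_compP_mul_eq_one (hdiag : ∀ i, 1 ≤ i → i ≤ n → A i i ≠ 0) (hk : 1 ≤ k)
    (hkn : k ≤ n) : ∑ j ∈ Icc k n, compP A n (n - j) * A j k = 1 := by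
  induction hkn using Nat.decreasingInduction with
  | self =>
    rw [Icc_self, sum_singleton, Nat.sub_self, compP, one_div_mul_cancel (hdiag n hk le_rfl)]
  | of_succ k hkn ih =>
    rw [sum_compP_mul_eq_sum_compP_mul_succ (hdiag k hk hkn.le) hkn]
    exact ih (by omega)

end ComplementaryKernels

theorem complementary_kernels_nonneg_and_orthogonal_general
    (N : ℕ) (A : ℕ → ℕ → ℝ)
    -- positivity: `A^{(n)}_{n−k} > 0` for `1 ≤ k ≤ n ≤ N`
    (hApos : ∀ n k, 1 ≤ k → k ≤ n → n ≤ N → 0 < A n k)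
    -- monotonicity: `A^{(n)}_{n−k−1} ≥ A^{(n)}_{n−k}` for `1 ≤ k ≤ n − 1`
    (hAmono : ∀ n k, 1 ≤ k → k + 1 ≤ n → n ≤ N → A n k ≤ A n (k + 1)) :
    -- `p^{(n)}_{n−j} ≥ 0` for `1 ≤ j ≤ n ≤ N`
    (∀ n j, 1 ≤ j → j ≤ n → n ≤ N → 0 ≤ compP A n (n - j)) ∧
    -- orthogonality: `Σ_{j=k}^n p^{(n)}_{n−j} A^{(j)}_{j−k} = 1` for `1 ≤ k ≤ n ≤ N`
    (∀ n k, 1 ≤ k → k ≤ n → n ≤ N →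
      ∑ j ∈ Finset.Icc k n, compP A n (n - j) * A j k = 1) := by
  have hdiag : ∀ n i, n ≤ N → 1 ≤ i → i ≤ n → 0 < A i i :=
    fun n i hnN hi hin => hApos i i hi le_rfl (hin.trans hnN)
  refine ⟨fun n j hj hjn hnN => compP_sub_nonneg ?_ ?_ hj hjn,
    fun n k hk hkn hnN => sum_compP_mul_eq_one ?_ hk hkn⟩
  · exact fun i hi hin => (hdiag n i hnN hi hin).le
  · exact fun k i hi hik hkn => hAmono k i hi hik (hkn.trans hnN)
  · exact fun i hi hin => (hdiag n i hnN hi hin).ne'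

theorem complementary_kernels_nonneg_and_orthogonal
    (N : ℕ) (hN : 1 ≤ N) (A : ℕ → ℕ → ℝ)
    -- positivity: `A^{(n)}_{n−k} > 0` for `1 ≤ k ≤ n ≤ N`
    (hApos : ∀ n k, 1 ≤ k → k ≤ n → n ≤ N → 0 < A n k)
    -- monotonicity: `A^{(n)}_{n−k−1} ≥ A^{(n)}_{n−k}` for `1 ≤ k ≤ n − 1`
    (hAmono : ∀ n k, 1 ≤ k → k + 1 ≤ n → n ≤ N → A n k ≤ A n (k + 1)) :
    -- `p^{(n)}_{n−j} ≥ 0` for `1 ≤ j ≤ n ≤ N`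
    (∀ n j, 1 ≤ j → j ≤ n → n ≤ N → 0 ≤ compP A n (n - j)) ∧
    -- orthogonality: `Σ_{j=k}^n p^{(n)}_{n−j} A^{(j)}_{j−k} = 1` for `1 ≤ k ≤ n ≤ N`
    (∀ n k, 1 ≤ k → k ≤ n → n ≤ N →
      ∑ j ∈ Finset.Icc k n, compP A n (n - j) * A j k = 1) :=
  complementary_kernels_nonneg_and_orthogonal_general N A hApos hAmono
end

section
/- (Consistency at the first time level.) Let 0 < α < 1, 0 < σ < 1, t₁ = τ₁ > 0 and a₀^{(1)} := τ₁^{−α}/Γ(2−α). Let v : [0, t₁] → ℝ be continuous on [0, t₁], differentiable on (0, t₁], and suppose |v′(t)| ≤ C_u t^{σ−1} for 0 < t ≤ t₁, with v′ integrable on (0, t₁). Define Υ¹ := ∫₀^{t₁} ω_{1−α}(t₁ − s) v′(s) ds − a₀^{(1)}(v(t₁) − v(0)). Then there exists a constant C, depending only on α and σ, such that |Υ¹| ≤ C · C_u · τ₁^{σ−α}, and consequently |Υ¹|/a₀^{(1)} ≤ C · Γ(2−α) · C_u · τ₁^{σ}. In particular, the L1 approximation of the Caputo derivative is inconsistent at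 the first level when σ ≤ α, while its weighted (global) contribution is of order τ₁^{σ}. -/
/-!
STATEMENT 15: consistency of the L1 formula at the first time level.  With
`a₀^{(1)} = τ₁^{−α}/Γ(2−α)` and `Υ¹ := ∫₀^{τ₁} ω_{1−α}(τ₁−s)v′(s) ds −
a₀^{(1)}(v(τ₁) − v(0))`, one has `|Υ¹| ≤ C·C_u·τ₁^{σ−α}` and
`|Υ¹|/a₀^{(1)} ≤ C·Γ(2−α)·C_u·τ₁^{σ}` with `C` depending only on `α, σ`.
-/

open Real MeasureTheory

theorem L1_first_level_consistency
    (α σ : ℝ) (hα0 : 0 < α) (hα1 : α < 1) (hσ0 : 0 < σ) (hσ1 : σ < 1) :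
    ∃ C : ℝ, 0 < C ∧
      ∀ (τ₁ Cu : ℝ) (v v' : ℝ → ℝ),
        0 < τ₁ →
        ContinuousOn v (Set.Icc 0 τ₁) →
        (∀ s ∈ Set.Ioc (0 : ℝ) τ₁, HasDerivAt v (v' s) s) →
        (∀ s ∈ Set.Ioc (0 : ℝ) τ₁, |v' s| ≤ Cu * s ^ (σ - 1)) →
        IntervalIntegrable v' MeasureTheory.volume 0 τ₁ →
        IntervalIntegrable (fun s => omega (1 - α) (τ₁ - s) * v' s)
          MeasureTheory.volume 0 τ₁ →
        |(∫ s in (0 : ℝ)..τ₁, omega (1 - α) (τ₁ - s) * v' s) -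
            (τ₁ ^ (-α) / Real.Gamma (2 - α)) * (v τ₁ - v 0)| ≤
          C * Cu * τ₁ ^ (σ - α) ∧
        |(∫ s in (0 : ℝ)..τ₁, omega (1 - α) (τ₁ - s) * v' s) -
            (τ₁ ^ (-α) / Real.Gamma (2 - α)) * (v τ₁ - v 0)| /
            (τ₁ ^ (-α) / Real.Gamma (2 - α)) ≤
          C * Real.Gamma (2 - α) * Cu * τ₁ ^ σ := by
  have hΓ1 : 0 < Real.Gamma (1 - α) := Real.Gamma_pos_of_pos (by linarith)
  have hΓ2 : 0 < Real.Gamma (2 - α) := Real.Gamma_pos_of_pos (by linarith)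
  set C : ℝ := ((2:ℝ) ^ α / σ + (2:ℝ) ^ (1 - σ) / (1 - α)) / Real.Gamma (1 - α)
      + 1 / (σ * Real.Gamma (2 - α)) with hC
  have h1α : (0:ℝ) < 1 - α := by linarith
  refine ⟨C, by positivity, ?_⟩
  intro τ₁ Cu v v' hτ hcont hderiv hbound hint hint2
  set a₀ : ℝ := τ₁ ^ (-α) / Real.Gamma (2 - α) with ha₀
  have ha₀pos : 0 < a₀ := by positivity
  have hCu : 0 ≤ Cu := by
    have h1 := (abs_nonneg (v' τ₁)).trans (hbound τ₁ ⟨hτ, le_refl _⟩)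
    nlinarith [Real.rpow_pos_of_pos hτ (σ - 1)]
  -- FTC
  have hftc : (∫ s in (0:ℝ)..τ₁, v' s) = v τ₁ - v 0 := by
    apply intervalIntegral.integral_eq_sub_of_hasDeriv_right_of_le hτ.le hcont
      (fun x hx => (hderiv x ⟨hx.1, hx.2.le⟩).hasDerivWithinAt) hint
  -- integrability of the bounding functions
  have hg1 : IntervalIntegrable (fun s : ℝ => s ^ (σ - 1)) volume 0 τ₁ :=
    intervalIntegral.intervalIntegrable_rpow' (by linarith)
  have hg2 : IntervalIntegrable (fun s : ℝ => (τ₁ - s) ^ (-α)) volume 0 τ₁ := by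
    have := (intervalIntegral.intervalIntegrable_rpow' (by linarith : (-1:ℝ) < -α)
      (a := 0) (b := τ₁)).comp_sub_left τ₁
    simpa using this.symm
  have hI1 : (∫ s in (0:ℝ)..τ₁, s ^ (σ - 1)) = τ₁ ^ σ / σ := by
    rw [integral_rpow (Or.inl (by linarith))]
    rw [Real.zero_rpow (by linarith : σ - 1 + 1 ≠ 0)]
    norm_num
  have hI2 : (∫ s in (0:ℝ)..τ₁, (τ₁ - s) ^ (-α)) = τ₁ ^ (1 - α) / (1 - α) := by
    rw [intervalIntegral.integral_comp_sub_left (fun u => u ^ (-α)) τ₁]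
    simp only [sub_self, sub_zero]
    rw [integral_rpow (Or.inl (by linarith))]
    rw [Real.zero_rpow (by linarith : -α + 1 ≠ 0)]
    ring_nf
  -- Part A : |v τ₁ - v 0| ≤ Cu * τ₁ ^ σ / σ
  have hA : |v τ₁ - v 0| ≤ Cu * (τ₁ ^ σ / σ) := by
    rw [← hftc, intervalIntegral.integral_of_le hτ.le]
    calc |∫ s in Set.Ioc (0:ℝ) τ₁, v' s| ≤ ∫ s in Set.Ioc (0:ℝ) τ₁, |v' s| := by
          simpa only [Real.norm_eq_abs] using
            MeasureTheory.norm_integral_le_integral_norm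
              (μ := volume.restrict (Set.Ioc (0:ℝ) τ₁)) v'
      _ ≤ ∫ s in Set.Ioc (0:ℝ) τ₁, Cu * s ^ (σ - 1) := by
          apply setIntegral_mono_on hint.1.abs (hg1.1.const_mul Cu) measurableSet_Ioc
          intro s hs; exact hbound s hs
      _ = Cu * (τ₁ ^ σ / σ) := by
          rw [← intervalIntegral.integral_of_le hτ.le,
            intervalIntegral.integral_const_mul, hI1]
  -- bounding function for the main integrand
  set g : ℝ → ℝ := fun s => (Cu / Real.Gamma (1 - α)) *
      ((τ₁ / 2) ^ (-α) * s ^ (σ - 1) + (τ₁ / 2) ^ (σ - 1) * (τ₁ - s) ^ (-α)) with hg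
  have hτ2 : (0:ℝ) < τ₁ / 2 := by linarith
  have hkey : ∀ s ∈ Set.Ioc (0:ℝ) τ₁, |omega (1 - α) (τ₁ - s) * v' s| ≤ g s := by
    intro s hs
    have hs0 : 0 < s := hs.1
    have hsτ : s ≤ τ₁ := hs.2
    have hω : omega (1 - α) (τ₁ - s) = (τ₁ - s) ^ (-α) / Real.Gamma (1 - α) := by
      unfold omega; ring_nf
    have hωnn : 0 ≤ (τ₁ - s) ^ (-α) / Real.Gamma (1 - α) :=
      div_nonneg (Real.rpow_nonneg (by linarith) _) hΓ1.le
    rw [hω, abs_mul, abs_of_nonneg hωnn]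
    have h1 : (τ₁ - s) ^ (-α) / Real.Gamma (1 - α) * |v' s| ≤
        (τ₁ - s) ^ (-α) / Real.Gamma (1 - α) * (Cu * s ^ (σ - 1)) :=
      mul_le_mul_of_nonneg_left (hbound s hs) hωnn
    refine h1.trans ?_
    rw [hg]
    have hmain : (τ₁ - s) ^ (-α) * s ^ (σ - 1) ≤
        (τ₁ / 2) ^ (-α) * s ^ (σ - 1) + (τ₁ / 2) ^ (σ - 1) * (τ₁ - s) ^ (-α) := by
      rcases le_or_gt s (τ₁ / 2) with hcase | hcase
      · have hb : (τ₁ - s) ^ (-α) ≤ (τ₁ / 2) ^ (-α) :=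
          Real.rpow_le_rpow_of_nonpos hτ2 (by linarith) (by linarith)
        have := mul_le_mul_of_nonneg_right hb
          (Real.rpow_nonneg hs0.le (σ - 1))
        nlinarith [Real.rpow_nonneg (by linarith : (0:ℝ) ≤ τ₁/2) (σ-1),
          Real.rpow_nonneg (by linarith : (0:ℝ) ≤ τ₁ - s) (-α)]
      · have hb : s ^ (σ - 1) ≤ (τ₁ / 2) ^ (σ - 1) :=
          Real.rpow_le_rpow_of_nonpos hτ2 hcase.le (by linarith)
        have := mul_le_mul_of_nonneg_left hb
          (Real.rpow_nonneg (by linarith : (0:ℝ) ≤ τ₁ - s) (-α))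
        nlinarith [Real.rpow_nonneg (by linarith : (0:ℝ) ≤ τ₁/2) (-α),
          Real.rpow_nonneg hs0.le (σ-1)]
    calc (τ₁ - s) ^ (-α) / Real.Gamma (1 - α) * (Cu * s ^ (σ - 1))
        = (Cu / Real.Gamma (1 - α)) * ((τ₁ - s) ^ (-α) * s ^ (σ - 1)) := by ring
      _ ≤ (Cu / Real.Gamma (1 - α)) *
            ((τ₁ / 2) ^ (-α) * s ^ (σ - 1) + (τ₁ / 2) ^ (σ - 1) * (τ₁ - s) ^ (-α)) := by
          apply mul_le_mul_of_nonneg_left hmain (by positivity)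
  have hgint : IntervalIntegrable g volume 0 τ₁ := by
    apply IntervalIntegrable.const_mul
    exact (hg1.const_mul _).add (hg2.const_mul _)
  -- value of ∫ g
  have hIg : (∫ s in (0:ℝ)..τ₁, g s) = (Cu / Real.Gamma (1 - α)) *
      ((τ₁ / 2) ^ (-α) * (τ₁ ^ σ / σ) + (τ₁ / 2) ^ (σ - 1) * (τ₁ ^ (1 - α) / (1 - α))) := by
    rw [hg]
    rw [intervalIntegral.integral_const_mul]
    rw [intervalIntegral.integral_add (hg1.const_mul _) (hg2.const_mul _),
      intervalIntegral.integral_const_mul, intervalIntegral.integral_const_mul, hI1, hI2]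
  -- Part B : bound on the main integral
  have hB : |∫ s in (0:ℝ)..τ₁, omega (1 - α) (τ₁ - s) * v' s| ≤ ∫ s in (0:ℝ)..τ₁, g s := by
    rw [intervalIntegral.integral_of_le hτ.le, intervalIntegral.integral_of_le hτ.le]
    calc |∫ s in Set.Ioc (0:ℝ) τ₁, omega (1 - α) (τ₁ - s) * v' s|
        ≤ ∫ s in Set.Ioc (0:ℝ) τ₁, |omega (1 - α) (τ₁ - s) * v' s| := by
          simpa only [Real.norm_eq_abs] using
            MeasureTheory.norm_integral_le_integral_norm
              (μ := volume.restrict (Set.Ioc (0:ℝ) τ₁))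
              (fun s => omega (1 - α) (τ₁ - s) * v' s)
      _ ≤ ∫ s in Set.Ioc (0:ℝ) τ₁, g s :=
          setIntegral_mono_on hint2.1.abs hgint.1 measurableSet_Ioc hkey
  -- rpow arithmetic
  have e2pos : (0:ℝ) < 2 := two_pos
  have ehalf : ∀ x : ℝ, (τ₁ / 2) ^ x = τ₁ ^ x * (2:ℝ) ^ (-x) := by
    intro x
    rw [Real.div_rpow hτ.le e2pos.le, Real.rpow_neg e2pos.le, div_eq_mul_inv]
  have ehalf1 : (τ₁ / 2) ^ (-α) = τ₁ ^ (-α) * (2:ℝ) ^ α := by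
    rw [ehalf, neg_neg]
  have ehalf2 : (τ₁ / 2) ^ (σ - 1) = τ₁ ^ (σ - 1) * (2:ℝ) ^ (1 - σ) := by
    rw [ehalf, neg_sub]
  have emul1 : τ₁ ^ (-α) * τ₁ ^ σ = τ₁ ^ (σ - α) := by
    rw [← Real.rpow_add hτ]; ring_nf
  have emul2 : τ₁ ^ (σ - 1) * τ₁ ^ (1 - α) = τ₁ ^ (σ - α) := by
    rw [← Real.rpow_add hτ]; ring_nf
  have hIgval : (∫ s in (0:ℝ)..τ₁, g s) =
      Cu / Real.Gamma (1 - α) * (((2:ℝ) ^ α / σ + (2:ℝ) ^ (1 - σ) / (1 - α)) * τ₁ ^ (σ - α)) := by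
    rw [hIg, ehalf1, ehalf2]
    have : τ₁ ^ (-α) * (2:ℝ) ^ α * (τ₁ ^ σ / σ) = (2:ℝ) ^ α / σ * (τ₁ ^ (-α) * τ₁ ^ σ) := by ring
    rw [this, emul1]
    have : τ₁ ^ (σ - 1) * (2:ℝ) ^ (1 - σ) * (τ₁ ^ (1 - α) / (1 - α)) =
        (2:ℝ) ^ (1 - σ) / (1 - α) * (τ₁ ^ (σ - 1) * τ₁ ^ (1 - α)) := by ring
    rw [this, emul2]; ring
  -- first inequality
  have hfirst : |(∫ s in (0:ℝ)..τ₁, omega (1 - α) (τ₁ - s) * v' s) - a₀ * (v τ₁ - v 0)| ≤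
      C * Cu * τ₁ ^ (σ - α) := by
    calc |(∫ s in (0:ℝ)..τ₁, omega (1 - α) (τ₁ - s) * v' s) - a₀ * (v τ₁ - v 0)|
        ≤ |∫ s in (0:ℝ)..τ₁, omega (1 - α) (τ₁ - s) * v' s| + |a₀ * (v τ₁ - v 0)| :=
          abs_sub _ _
      _ ≤ (∫ s in (0:ℝ)..τ₁, g s) + a₀ * (Cu * (τ₁ ^ σ / σ)) := by
          refine add_le_add hB ?_
          rw [abs_mul, abs_of_pos ha₀pos]
          exact mul_le_mul_of_nonneg_left hA ha₀pos.le
      _ = C * Cu * τ₁ ^ (σ - α) := by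
          rw [hIgval, hC, ha₀]
          have : τ₁ ^ (-α) / Real.Gamma (2 - α) * (Cu * (τ₁ ^ σ / σ)) =
              Cu / (σ * Real.Gamma (2 - α)) * (τ₁ ^ (-α) * τ₁ ^ σ) := by
            field_simp
          rw [this, emul1]; ring
  refine ⟨hfirst, ?_⟩
  rw [div_le_iff₀ ha₀pos]
  have : C * Real.Gamma (2 - α) * Cu * τ₁ ^ σ * a₀ = C * Cu * (τ₁ ^ (-α) * τ₁ ^ σ) := by
    rw [ha₀]; field_simp
  rw [this, emul1]
  exact hfirst
end
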